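/- Let (Ω,ℱ,ℙ) be a probability space, P ≪ ℙ a probability measure and Q ≪ P a probability measure with generalized entropy V(Q|P) = E_P[V(dQ/dP)] < ∞ and, moreover, E_P[V(λ·dQ/dP)] < ∞ for every λ > 0. Let U satisfy the Inada conditions. Let (k^n)_{n∈ℕ} be a sequence of random variables with each k^n ∈ L¹(Q), E_Q[k^n] ≤ 0, sup_n E_Q[|k^n|] < ∞, sup_n E_P[|U(k^n)|] < ∞, and suppose k^n converges P-almost surely to a random variable k. Then k ∈ L¹(Q), U(k) ∈ L¹(P), E_Q[k] ≤ 0, and limsup_n E_P[U(k^n)] ≤ E_P[U(k)]. -/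

import Mathlib

/-!
Young's inequality `U(x) - x y ≤ V(y)` with `y = λ dQ/dP` bounds `U(kⁿ) - λ kⁿ dQ/dP` above by
the integrable function `V(λ dQ/dP)`, so the reverse Fatou lemma applies to it. Since
`E_Q[kⁿ] ≤ 0`, this gives `limsup_n E_P[U(kⁿ)] ≤ E_P[U(k)] - λ E_Q[k]` for every `λ > 0`;
letting `λ → ∞` forces `E_Q[k] ≤ 0`, and letting `λ → 0` gives the limsup inequality.
Integrability of the limits is Fatou's lemma applied to the `L¹` bounds.
-/

open MeasureTheory Filter Set Topology

theorem ConcaveOn.le_add_deriv_mul_sub {U : ℝ → ℝ} (hU : ConcaveOn ℝ univ U) {a : ℝ}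
    (ha : DifferentiableAt ℝ U a) (x : ℝ) : U x ≤ U a + deriv U a * (x - a) := by
  rcases lt_trichotomy x a with hxa | rfl | hax
  · have hs := hU.deriv_le_slope (mem_univ x) (mem_univ a) hxa ha
    rw [slope_def_field, le_div_iff₀ (sub_pos.2 hxa)] at hs
    linarith
  · simp
  · have hs := hU.slope_le_deriv (mem_univ a) (mem_univ x) hax ha
    rw [slope_def_field, div_le_iff₀ (sub_pos.2 hax)] at hs
    linarith

theorem ConcaveOn.bddAbove_range_sub_mul {U : ℝ → ℝ} (hU : ConcaveOn ℝ univ U) {a b y : ℝ}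
    (ha : DifferentiableAt ℝ U a) (hb : DifferentiableAt ℝ U b)
    (hya : y ≤ deriv U a) (hby : deriv U b ≤ y) :
    BddAbove (range fun x => U x - x * y) := by
  refine ⟨max (U a - a * y) (U b - b * y + (deriv U b - y) * (a - b)), ?_⟩
  rintro _ ⟨x, rfl⟩
  rcases le_total x a with hxa | hax
  · have := hU.le_add_deriv_mul_sub ha x
    exact le_max_of_le_left (by nlinarith)
  · have := hU.le_add_deriv_mul_sub hb x
    exact le_max_of_le_right (by nlinarith)

theorem sub_mul_le_of_eq_iSup {U V : ℝ → ℝ} (hUdiff : Differentiable ℝ U)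
    (hU : ConcaveOn ℝ univ U) (hInada1 : Tendsto (deriv U) atBot atTop)
    (hInada2 : Tendsto (deriv U) atTop (𝓝 0))
    (hV : ∀ y : ℝ, 0 < y → V y = ⨆ x : ℝ, (U x - x * y)) {y : ℝ} (hy : 0 < y) (x : ℝ) :
    U x - x * y ≤ V y := by
  obtain ⟨a, ha⟩ := (hInada1.eventually_gt_atTop y).exists
  obtain ⟨b, hb⟩ := (hInada2.eventually_lt_const hy).exists
  rw [hV y hy]
  exact le_ciSup (hU.bddAbove_range_sub_mul (hUdiff a) (hUdiff b) ha.le hb.le) x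

theorem le_of_forall_pos_le_sub_mul {L A B : ℝ} (h : ∀ l : ℝ, 0 < l → L ≤ A - l * B) :
    L ≤ A := by
  have hlim : Tendsto (fun l => A - l * B) (𝓝[>] 0) (𝓝 A) :=
    ((continuous_const.sub (continuous_id.mul continuous_const)).tendsto' 0 A
      (by simp)).mono_left nhdsWithin_le_nhds
  exact ge_of_tendsto hlim (eventually_nhdsWithin_of_forall h)

theorem nonpos_of_forall_pos_le_sub_mul {L A B : ℝ} (h : ∀ l : ℝ, 0 < l → L ≤ A - l * B) :
    B ≤ 0 := by
  by_contra! hB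
  have hl := h ((|A - L| + 1) / B) (by positivity)
  rw [div_mul_cancel₀ _ hB.ne'] at hl
  linarith [le_abs_self (A - L)]

namespace MeasureTheory

variable {α : Type*} [MeasurableSpace α] {μ : Measure α}

theorem integrable_of_tendsto_ae_of_integral_norm_le {E : Type*} [NormedAddCommGroup E]
    {f : ℕ → α → E} {g : α → E} (hf : ∀ n, Integrable (f n) μ)
    (hlim : ∀ᵐ a ∂μ, Tendsto (fun n => f n a) atTop (𝓝 (g a))) {C : ℝ}
    (hC : ∀ n, ∫ a, ‖f n a‖ ∂μ ≤ C) : Integrable g μ := by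
  refine memLp_one_iff_integrable.1
    ⟨aestronglyMeasurable_of_tendsto_ae _ (fun n => (hf n).1) hlim, ?_⟩
  calc eLpNorm g 1 μ ≤ liminf (fun n => eLpNorm (f n) 1 μ) atTop :=
        Lp.eLpNorm_lim_le_liminf_eLpNorm (fun n => (hf n).1) g hlim
    _ ≤ ENNReal.ofReal C := by
        refine liminf_le_of_frequently_le' (Frequently.of_forall fun n => ?_)
        rw [eLpNorm_one_eq_lintegral_enorm, ← ofReal_integral_norm_eq_lintegral_enorm (hf n)]
        exact ENNReal.ofReal_le_ofReal (hC n)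
    _ < ⊤ := ENNReal.ofReal_lt_top

theorem eventually_lt_integral_of_tendsto_ae {g : ℕ → α → ℝ} {G : α → ℝ}
    (hg : ∀ n, Integrable (g n) μ) (hg0 : ∀ n, 0 ≤ᵐ[μ] g n) (hG : Integrable G μ)
    (hlim : ∀ᵐ a ∂μ, Tendsto (fun n => g n a) atTop (𝓝 (G a))) {b : ℝ}
    (hb : b < ∫ a, G a ∂μ) : ∀ᶠ n in atTop, b < ∫ a, g n a ∂μ := by
  rcases lt_or_ge b 0 with hb0 | hb0
  · exact Eventually.of_forall fun n => hb0.trans_le (integral_nonneg_of_ae (hg0 n))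
  have hG0 : 0 ≤ᵐ[μ] G := by
    filter_upwards [hlim, ae_all_iff.2 hg0] with a ha h0 using ge_of_tendsto' ha h0
  have fatou : ENNReal.ofReal (∫ a, G a ∂μ) ≤
      liminf (fun n => ENNReal.ofReal (∫ a, g n a ∂μ)) atTop := by
    calc ENNReal.ofReal (∫ a, G a ∂μ)
        = ∫⁻ a, liminf (fun n => ENNReal.ofReal (g n a)) atTop ∂μ := by
          rw [ofReal_integral_eq_lintegral_ofReal hG hG0]
          exact lintegral_congr_ae (hlim.mono fun a ha =>
            ((ENNReal.continuous_ofReal.tendsto _).comp ha).liminf_eq.symm)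
      _ ≤ liminf (fun n => ∫⁻ a, ENNReal.ofReal (g n a) ∂μ) atTop :=
          lintegral_liminf_le' fun n => (hg n).aemeasurable.ennreal_ofReal
      _ = liminf (fun n => ENNReal.ofReal (∫ a, g n a ∂μ)) atTop := by
          simp_rw [ofReal_integral_eq_lintegral_ofReal (hg _) (hg0 _)]
  have hlt : ENNReal.ofReal b < liminf (fun n => ENNReal.ofReal (∫ a, g n a ∂μ)) atTop :=
    ((ENNReal.ofReal_lt_ofReal_iff (hb0.trans_lt hb)).2 hb).trans_le fatou
  filter_upwards [eventually_lt_of_lt_liminf hlt] with n hn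
  exact ((ENNReal.ofReal_lt_ofReal_iff').1 hn).1

theorem limsup_integral_le_integral_of_tendsto_ae {f : ℕ → α → ℝ} {F h : α → ℝ}
    (hf : ∀ n, Integrable (f n) μ) (hF : Integrable F μ) (hh : Integrable h μ)
    (hfh : ∀ n, f n ≤ᵐ[μ] h) (hlim : ∀ᵐ a ∂μ, Tendsto (fun n => f n a) atTop (𝓝 (F a)))
    (hcobdd : IsCoboundedUnder (· ≤ ·) atTop fun n => ∫ a, f n a ∂μ) :
    limsup (fun n => ∫ a, f n a ∂μ) atTop ≤ ∫ a, F a ∂μ := by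
  refine le_of_forall_pos_le_add fun ε hε => limsup_le_of_le hcobdd ?_
  have hev := eventually_lt_integral_of_tendsto_ae (g := fun n a => h a - f n a)
    (G := fun a => h a - F a) (fun n => hh.sub (hf n))
    (fun n => (hfh n).mono fun a ha => sub_nonneg.2 ha)
    (hh.sub hF) (hlim.mono fun a ha => ha.const_sub (h a))
    (b := ∫ a, h a - F a ∂μ - ε) (by linarith)
  filter_upwards [hev] with n hn
  rw [integral_sub hh (hf n), integral_sub hh hF] at hn
  linarith

end MeasureTheory

section RnDeriv

variable {Ω : Type*} [MeasurableSpace Ω] {P Q : Measure Ω} [SigmaFinite Q]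

theorem ae_sub_mul_le_of_eq_iSup {U V : ℝ → ℝ} (hUdiff : Differentiable ℝ U)
    (hU : ConcaveOn ℝ univ U) (hInada1 : Tendsto (deriv U) atBot atTop)
    (hInada2 : Tendsto (deriv U) atTop (𝓝 0))
    (hV : ∀ y : ℝ, 0 < y → V y = ⨆ x : ℝ, (U x - x * y))
    (hV0 : BddAbove (range U) → V 0 = sSup (range U))
    (hpos : ¬ BddAbove (range U) → ∀ᵐ ω ∂P, 0 < Q.rnDeriv P ω) {l : ℝ} (hl : 0 < l) :
    ∀ᵐ ω ∂P, ∀ x, U x - x * (l * (Q.rnDeriv P ω).toReal) ≤ V (l * (Q.rnDeriv P ω).toReal) := by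
  have hdens : ∀ᵐ ω ∂P, 0 < (Q.rnDeriv P ω).toReal ∨ BddAbove (range U) := by
    by_cases hb : BddAbove (range U)
    · exact Eventually.of_forall fun _ => Or.inr hb
    · filter_upwards [hpos hb, Q.rnDeriv_lt_top P] with ω h0 htop
      exact Or.inl (ENNReal.toReal_pos h0.ne' htop.ne)
  filter_upwards [hdens] with ω hω x
  rcases ENNReal.toReal_nonneg.lt_or_eq with hz | hz
  · exact sub_mul_le_of_eq_iSup hUdiff hU hInada1 hInada2 hV (mul_pos hl hz) x
  · have hb : BddAbove (range U) := hω.resolve_left hz.symm.not_gt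
    rw [← hz, mul_zero, mul_zero, sub_zero, hV0 hb]
    exact le_csSup hb ⟨x, rfl⟩

variable [Q.HaveLebesgueDecomposition P]

theorem integrable_sub_mul_mul_rnDeriv (hQP : Q ≪ P) {g f : Ω → ℝ} (hg : Integrable g P)
    (hf : Integrable f Q) (l : ℝ) :
    Integrable (fun ω => g ω - f ω * (l * (Q.rnDeriv P ω).toReal)) P := by
  refine (hg.sub (((integrable_toReal_rnDeriv_mul_iff hQP).2 hf).const_mul l)).congr
    (Eventually.of_forall fun ω => ?_)
  simp only [Pi.sub_apply]
  ring

theorem integral_sub_mul_mul_rnDeriv (hQP : Q ≪ P) {g f : Ω → ℝ} (hg : Integrable g P)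
    (hf : Integrable f Q) (l : ℝ) :
    ∫ ω, (g ω - f ω * (l * (Q.rnDeriv P ω).toReal)) ∂P = ∫ ω, g ω ∂P - l * ∫ ω, f ω ∂Q := by
  rw [← integral_toReal_rnDeriv_mul hQP, ← integral_const_mul,
    ← integral_sub hg (((integrable_toReal_rnDeriv_mul_iff hQP).2 hf).const_mul l)]
  congr 1 with ω
  ring

theorem limsup_integral_comp_le_sub_mul_integral (hQP : Q ≪ P) {U V : ℝ → ℝ}
    (hU : Continuous U) {l : ℝ} (hl : 0 ≤ l)
    (hyoung : ∀ᵐ ω ∂P, ∀ x,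
      U x - x * (l * (Q.rnDeriv P ω).toReal) ≤ V (l * (Q.rnDeriv P ω).toReal))
    (hVint : Integrable (fun ω => V (l * (Q.rnDeriv P ω).toReal)) P)
    {k : ℕ → Ω → ℝ} {klim : Ω → ℝ} (hkQ : ∀ n, Integrable (k n) Q)
    (hkmean : ∀ n, ∫ ω, k n ω ∂Q ≤ 0) (hUint : ∀ n, Integrable (fun ω => U (k n ω)) P)
    (hcobdd : IsCoboundedUnder (· ≤ ·) atTop fun n => ∫ ω, U (k n ω) ∂P)
    (hklimQ : Integrable klim Q) (hUklim : Integrable (fun ω => U (klim ω)) P)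
    (hconv : ∀ᵐ ω ∂P, Tendsto (fun n => k n ω) atTop (𝓝 (klim ω))) :
    limsup (fun n => ∫ ω, U (k n ω) ∂P) atTop ≤
      ∫ ω, U (klim ω) ∂P - l * ∫ ω, klim ω ∂Q := by
  set f : ℕ → Ω → ℝ := fun n ω => U (k n ω) - k n ω * (l * (Q.rnDeriv P ω).toReal)
  have hf : ∀ n, Integrable (f n) P := fun n =>
    integrable_sub_mul_mul_rnDeriv hQP (hUint n) (hkQ n) l
  have hfV : ∀ n, f n ≤ᵐ[P] fun ω => V (l * (Q.rnDeriv P ω).toReal) := fun n =>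
    hyoung.mono fun ω hω => hω (k n ω)
  have hle : ∀ n, ∫ ω, U (k n ω) ∂P ≤ ∫ ω, f n ω ∂P := fun n => by
    rw [integral_sub_mul_mul_rnDeriv hQP (hUint n) (hkQ n) l]
    nlinarith [hkmean n]
  obtain ⟨a, ha⟩ := hcobdd.frequently_ge
  calc limsup (fun n => ∫ ω, U (k n ω) ∂P) atTop
      ≤ limsup (fun n => ∫ ω, f n ω ∂P) atTop :=
        limsup_le_limsup (Eventually.of_forall hle) hcobdd
          (isBoundedUnder_of ⟨_, fun n => integral_mono_ae (hf n) hVint (hfV n)⟩)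
    _ ≤ ∫ ω, (U (klim ω) - klim ω * (l * (Q.rnDeriv P ω).toReal)) ∂P :=
        limsup_integral_le_integral_of_tendsto_ae hf
          (integrable_sub_mul_mul_rnDeriv hQP hUklim hklimQ l) hVint hfV
          (hconv.mono fun ω hω => ((hU.tendsto _).comp hω).sub (hω.mul_const _))
          (IsCoboundedUnder.of_frequently_ge (ha.mono fun n hn => hn.trans (hle n)))
    _ = ∫ ω, U (klim ω) ∂P - l * ∫ ω, klim ω ∂Q :=
        integral_sub_mul_mul_rnDeriv hQP hUklim hklimQ l

end RnDeriv

theorem stmt_1_general {Ω : Type*} [MeasurableSpace Ω]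
    (P Q : Measure Ω) [IsProbabilityMeasure P]
    [IsProbabilityMeasure Q]
    (hQP : Q ≪ P)
    (U V : ℝ → ℝ)
    (hUdiff : Differentiable ℝ U)
    (hUconc : StrictConcaveOn ℝ Set.univ U)
    (hInada1 : Tendsto (deriv U) atBot atTop)
    (hInada2 : Tendsto (deriv U) atTop (nhds 0))
    (hV : ∀ y : ℝ, 0 < y → V y = ⨆ x : ℝ, (U x - x * y))
    (hV0 : BddAbove (Set.range U) → V 0 = sSup (Set.range U))
    (hpos : ¬ BddAbove (Set.range U) → ∀ᵐ ω ∂P, 0 < Q.rnDeriv P ω)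
    (hentl : ∀ l : ℝ, 0 < l → Integrable (fun ω => V (l * (Q.rnDeriv P ω).toReal)) P)
    (k : ℕ → Ω → ℝ)
    (hkQ : ∀ n, Integrable (k n) Q)
    (hkmean : ∀ n, ∫ ω, k n ω ∂Q ≤ 0)
    (hkQbdd : ∃ C : ℝ, ∀ n, ∫ ω, |k n ω| ∂Q ≤ C)
    (hUint : ∀ n, Integrable (fun ω => U (k n ω)) P)
    (hUbdd : ∃ C : ℝ, ∀ n, ∫ ω, |U (k n ω)| ∂P ≤ C)
    (klim : Ω → ℝ)
    (hconv : ∀ᵐ ω ∂P, Tendsto (fun n => k n ω) atTop (nhds (klim ω))) :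
    Integrable klim Q ∧
    Integrable (fun ω => U (klim ω)) P ∧
    (∫ ω, klim ω ∂Q) ≤ 0 ∧
    limsup (fun n => ∫ ω, U (k n ω) ∂P) atTop ≤ ∫ ω, U (klim ω) ∂P := by
  obtain ⟨C₁, hC₁⟩ := hkQbdd
  obtain ⟨C₂, hC₂⟩ := hUbdd
  have hklimQ : Integrable klim Q :=
    integrable_of_tendsto_ae_of_integral_norm_le hkQ (hconv.filter_mono hQP.ae_le)
      (C := C₁) (by simpa only [Real.norm_eq_abs] using hC₁)
  have hUklim : Integrable (fun ω => U (klim ω)) P :=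
    integrable_of_tendsto_ae_of_integral_norm_le hUint
      (hconv.mono fun ω hω => (hUdiff.continuous.tendsto _).comp hω)
      (C := C₂) (by simpa only [Real.norm_eq_abs] using hC₂)
  have hcobdd : IsCoboundedUnder (· ≤ ·) atTop fun n => ∫ ω, U (k n ω) ∂P :=
    isCoboundedUnder_le_of_le atTop (x := -C₂) fun n =>
      neg_le_of_abs_le (abs_integral_le_integral_abs.trans (hC₂ n))
  have key : ∀ l : ℝ, 0 < l → limsup (fun n => ∫ ω, U (k n ω) ∂P) atTop ≤
      ∫ ω, U (klim ω) ∂P - l * ∫ ω, klim ω ∂Q := fun l hl =>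
    limsup_integral_comp_le_sub_mul_integral hQP hUdiff.continuous hl.le
      (ae_sub_mul_le_of_eq_iSup hUdiff hUconc.concaveOn hInada1 hInada2 hV hV0 hpos hl)
      (hentl l hl) hkQ hkmean hUint hcobdd hklimQ hUklim hconv
  exact ⟨hklimQ, hUklim, nonpos_of_forall_pos_le_sub_mul key, le_of_forall_pos_le_sub_mul key⟩

/-- Lemma (Biagini–Černý type, part (c)): if `kⁿ → k` P-a.s., the sequences are bounded
in `L¹(Q)` and `L¹(P)` (after applying `U`), `E_Q[kⁿ] ≤ 0` and all the generalized
entropies `E_P[V(λ dQ/dP)]` are finite, then `k ∈ L¹(Q)`, `U(k) ∈ L¹(P)`, `E_Q[k] ≤ 0`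
and `limsup_n E_P[U(kⁿ)] ≤ E_P[U(k)]`. -/
theorem stmt_1 {Ω : Type*} [MeasurableSpace Ω]
    (μ P Q : Measure Ω) [IsProbabilityMeasure μ] [IsProbabilityMeasure P]
    [IsProbabilityMeasure Q]
    (hPμ : P ≪ μ) (hQP : Q ≪ P)
    (U V : ℝ → ℝ)
    (hUdiff : Differentiable ℝ U)
    (hUconc : StrictConcaveOn ℝ Set.univ U)
    (hInada1 : Tendsto (deriv U) atBot atTop)
    (hInada2 : Tendsto (deriv U) atTop (nhds 0))
    (hV : ∀ y : ℝ, 0 < y → V y = ⨆ x : ℝ, (U x - x * y))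
    (hV0 : BddAbove (Set.range U) → V 0 = sSup (Set.range U))
    (hpos : ¬ BddAbove (Set.range U) → ∀ᵐ ω ∂P, 0 < Q.rnDeriv P ω)
    (hent : Integrable (fun ω => V ((Q.rnDeriv P ω).toReal)) P)
    (hentl : ∀ l : ℝ, 0 < l → Integrable (fun ω => V (l * (Q.rnDeriv P ω).toReal)) P)
    (k : ℕ → Ω → ℝ) (hkmeas : ∀ n, Measurable (k n))
    (hkQ : ∀ n, Integrable (k n) Q)
    (hkmean : ∀ n, ∫ ω, k n ω ∂Q ≤ 0)
    (hkQbdd : ∃ C : ℝ, ∀ n, ∫ ω, |k n ω| ∂Q ≤ C)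
    (hUint : ∀ n, Integrable (fun ω => U (k n ω)) P)
    (hUbdd : ∃ C : ℝ, ∀ n, ∫ ω, |U (k n ω)| ∂P ≤ C)
    (klim : Ω → ℝ) (hklimmeas : Measurable klim)
    (hconv : ∀ᵐ ω ∂P, Tendsto (fun n => k n ω) atTop (nhds (klim ω))) :
    Integrable klim Q ∧
    Integrable (fun ω => U (klim ω)) P ∧
    (∫ ω, klim ω ∂Q) ≤ 0 ∧
    limsup (fun n => ∫ ω, U (k n ω) ∂P) atTop ≤ ∫ ω, U (klim ω) ∂P :=
  stmt_1_general P Q hQP U V hUdiff hUconc hInada1 hInada2 hV hV0 hpos hentl k hkQ hkmean hkQbdd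
    hUint hUbdd klim hconv
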